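/- arXiv:1704.06872 — 2 statements merged into one kernel-verified Lean document; each statement's English description precedes it below -/
import Mathlib

section
/- Let d ≥ 1, let x₀ ∈ ℝ^d, and let d̂ ∈ ℝ^d be a unit vector. Write r = x − x₀ and define the dipole field h : ℝ^d ∖ {x₀} → ℝ^d by h(x) = (d·(r rᵀ)/‖r‖² − I) d̂ / ‖r‖^d, where I is the identity map and (r rᵀ) v = ⟨r, v⟩ r. Then h is divergence free on ℝ^d ∖ {x₀}: for every x ≠ x₀, div h(x) = Σ_{i=1}^d ∂h_i/∂x_i(x) = 0. -/
/-! Write the field centred at `0` as `ψ • u` with `ψ y = ‖y‖⁻ᵖ` and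
`u y = (p ⟪y, v⟫ / ‖y‖²) • y - v`. The product rule `div (ψ • u) = ψ' u + ψ div u` and
`div id = n` in dimension `n` give `div = p (n - p) ⟪y, v⟫ / ‖y‖^(p+2)`: in units of
`ψ ⟪y, v⟫ / ‖y‖²`, the term `ψ div u` contributes `p (n - 1)` and `ψ' u` contributes `-p (p - 1)`.
The dipole field is the case `p = n`. -/

open RealInnerProductSpace

/-- The dipole field `h(x) = (d (r rᵀ)/‖r‖² − I) d̂ / ‖r‖^d` with `r = x − x₀`,
where `(r rᵀ) v = ⟨r, v⟩ r` and `I` is the identity. -/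
noncomputable def dipoleField {d : ℕ} (x₀ dv : EuclideanSpace ℝ (Fin d)) :
    EuclideanSpace ℝ (Fin d) → EuclideanSpace ℝ (Fin d) := fun x =>
  (‖x - x₀‖ ^ d)⁻¹ •
    ((((d : ℝ) * ⟪x - x₀, dv⟫) / ‖x - x₀‖ ^ 2) • (x - x₀) - dv)

variable {E : Type*} [NormedAddCommGroup E] [InnerProductSpace ℝ E]

theorem hasFDerivAt_norm_of_ne_zero {x : E} (hx : x ≠ 0) :
    HasFDerivAt (‖·‖) (‖x‖⁻¹ • innerSL ℝ x) x := by
  have hsq : ‖x‖ ^ 2 ≠ 0 := by positivity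
  have h := (Real.hasDerivAt_sqrt hsq).comp_hasFDerivAt x (hasStrictFDerivAt_norm_sq x).hasFDerivAt
  simp only [Function.comp_def, Real.sqrt_sq (norm_nonneg _)] at h
  refine h.congr_fderiv ?_
  ext y
  simp only [one_div, mul_inv_rev, smul_apply, coe_innerSL_apply, nsmul_eq_mul,
    Nat.cast_ofNat, smul_eq_mul]
  field_simp

theorem hasFDerivAt_inv_norm_pow (p : ℕ) {x : E} (hx : x ≠ 0) :
    HasFDerivAt (fun y : E => (‖y‖ ^ p)⁻¹)
      ((-(p : ℝ) * (‖x‖ ^ p)⁻¹ / ‖x‖ ^ 2) • innerSL ℝ x) x := by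
  have hx' : ‖x‖ ≠ 0 := norm_ne_zero_iff.2 hx
  have h := (hasDerivAt_inv (pow_ne_zero p hx')).comp_hasFDerivAt x
    ((hasFDerivAt_norm_of_ne_zero hx).pow p)
  simp only [Function.comp_def, smul_smul] at h
  refine h.congr_fderiv ?_
  congr 1
  rcases p with _ | p
  · simp
  · simp only [nsmul_eq_mul, add_tsub_cancel_right]
    push_cast
    field_simp
    ring

theorem hasFDerivAt_inner_const_right (v x : E) :
    HasFDerivAt (fun y : E => ⟪y, v⟫) (innerSL ℝ v) x :=
  (innerSL ℝ v).hasFDerivAt.congr_of_eventuallyEq (.of_forall fun y => real_inner_comm v y)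

theorem hasFDerivAt_inner_div_norm_sq (a : ℝ) (v : E) {x : E} (hx : x ≠ 0) :
    HasFDerivAt (fun y : E => a * ⟪y, v⟫ / ‖y‖ ^ 2)
      ((a / ‖x‖ ^ 2) • innerSL ℝ v - (2 * a * ⟪x, v⟫ / ‖x‖ ^ 4) • innerSL ℝ x) x := by
  have hsq : ‖x‖ ^ 2 ≠ 0 := by positivity
  have h := ((hasFDerivAt_inner_const_right v x).const_mul a).mul
    ((hasDerivAt_inv hsq).comp_hasFDerivAt x (hasStrictFDerivAt_norm_sq x).hasFDerivAt)
  refine h.congr_fderiv ?_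
  ext y
  simp only [neg_smul, smul_neg, Function.comp_apply, add_apply,
    neg_apply, smul_apply, coe_innerSL_apply,
    nsmul_eq_mul, Nat.cast_ofNat, smul_eq_mul, sub_apply]
  field_simp
  ring

noncomputable def divergence (f : E → E) (x : E) : ℝ :=
  LinearMap.trace ℝ E (fderiv ℝ f x)

theorem divergence_sub_const (u : E → E) (c x : E) :
    divergence (fun y => u y - c) x = divergence u x := by
  rw [divergence, fderiv_sub_const, divergence]

theorem divergence_comp_sub (u : E → E) (a x : E) :
    divergence (fun y => u (y - a)) x = divergence u (x - a) := by
  rw [divergence, fderiv_comp_sub, divergence]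

section FiniteDimensional

variable [FiniteDimensional ℝ E]

theorem divergence_smul {φ : E → ℝ} {φ' : E →L[ℝ] ℝ} {u : E → E} {x : E}
    (hφ : HasFDerivAt φ φ' x) (hu : DifferentiableAt ℝ u x) :
    divergence (fun y => φ y • u y) x = φ' (u x) + φ x * divergence u x := by
  rw [divergence, (hφ.fun_smul hu.hasFDerivAt).fderiv, divergence]
  simp only [ContinuousLinearMap.toLinearMap_add, ContinuousLinearMap.toLinearMap_smul,
    ContinuousLinearMap.coe_smulRight, map_add, map_smul, smul_eq_mul, LinearMap.trace_smulRight,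
    ContinuousLinearMap.coe_coe]
  exact add_comm _ _

theorem divergence_id (x : E) : divergence (fun y : E => y) x = Module.finrank ℝ E := by
  rw [divergence, fderiv_fun_id, ContinuousLinearMap.coe_id, LinearMap.trace_id]

theorem divergence_inv_norm_pow_smul_dipole (p : ℕ) (v : E) {x : E} (hx : x ≠ 0) :
    divergence (fun y : E => (‖y‖ ^ p)⁻¹ • (((p : ℝ) * ⟪y, v⟫ / ‖y‖ ^ 2) • y - v)) x =
      p * (Module.finrank ℝ E - p) * ⟪x, v⟫ / ‖x‖ ^ (p + 2) := by
  have hφ := hasFDerivAt_inner_div_norm_sq (p : ℝ) v hx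
  have hu := (hφ.differentiableAt.fun_smul differentiableAt_fun_id).sub_const v
  rw [divergence_smul (hasFDerivAt_inv_norm_pow p hx) hu, divergence_sub_const,
    divergence_smul hφ differentiableAt_fun_id, divergence_id]
  have hx' : ‖x‖ ≠ 0 := norm_ne_zero_iff.2 hx
  simp only [neg_mul, smul_apply, coe_innerSL_apply, inner_sub_right,
    inner_smul_right, inner_self_eq_norm_sq_to_K, Real.ringHom_apply, smul_eq_mul,
    sub_apply, real_inner_comm x v]
  field_simp
  ring

end FiniteDimensional

theorem EuclideanSpace.sum_inner_single_eq_trace {ι : Type*} [Fintype ι] [DecidableEq ι]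
    (A : EuclideanSpace ℝ ι →L[ℝ] EuclideanSpace ℝ ι) :
    ∑ i, ⟪A (EuclideanSpace.single i 1), EuclideanSpace.single i 1⟫ =
      LinearMap.trace ℝ _ (A : EuclideanSpace ℝ ι →ₗ[ℝ] EuclideanSpace ℝ ι) := by
  simp [LinearMap.trace_eq_sum_inner (A : EuclideanSpace ℝ ι →ₗ[ℝ] EuclideanSpace ℝ ι)
    (EuclideanSpace.basisFun ι ℝ), real_inner_comm]

theorem dipoleField_div_eq_zero_general (d : ℕ)
    (x₀ dv : EuclideanSpace ℝ (Fin d)) :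
    ∀ x : EuclideanSpace ℝ (Fin d), x ≠ x₀ →
      ∑ i : Fin d,
        ⟪fderiv ℝ (dipoleField x₀ dv) x (EuclideanSpace.single i 1),
          EuclideanSpace.single i 1⟫ = 0 := by
  intro x hx
  have h := divergence_inv_norm_pow_smul_dipole d dv (sub_ne_zero.2 hx)
  rw [← divergence_comp_sub, finrank_euclideanSpace_fin, sub_self, mul_zero, zero_mul,
    zero_div] at h
  rw [EuclideanSpace.sum_inner_single_eq_trace]
  exact h

/-- The dipole field is divergence free away from the dipole location:
`div h(x) = ∑ i ⟨Dh(x) eᵢ, eᵢ⟩ = 0` for `x ≠ x₀`. -/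
theorem dipoleField_div_eq_zero (d : ℕ) (hd : 1 ≤ d)
    (x₀ dv : EuclideanSpace ℝ (Fin d)) (hdv : ‖dv‖ = 1) :
    ∀ x : EuclideanSpace ℝ (Fin d), x ≠ x₀ →
      ∑ i : Fin d,
        ⟪fderiv ℝ (dipoleField x₀ dv) x (EuclideanSpace.single i 1),
          EuclideanSpace.single i 1⟫ = 0 :=
  dipoleField_div_eq_zero_general d x₀ dv
end

section
/- Let d ≥ 1, let U ⊆ ℝ^d be open, let h : U → ℝ^d be twice continuously differentiable with each component harmonic on U, and let [a, b] = Π_{i=1}^d [a_i, b_i] be a closed rectangular box with a_i < b_i contained in U. Then the total outward flux of the Kelvin force f(h) = ∇(‖h‖²) through the boundary of the box is nonnegative: Σ_{i=1}^d ( ∫_{face x_i = b_i} ∂(‖h‖²)/∂x_i − ∫_{face x_i = a_i} ∂(‖h‖²)/∂x_i ) ≥ 0, where each face integral is taken with respect to (d−1)-dimensional Lebesgue measure on the corresponding face of the box. -/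
/-!
By the divergence theorem on the box, the flux of `∇‖h‖²` through its boundary is the integral of
`Δ‖h‖²` over the box. Writing `‖h‖² = ∑ⱼ hⱼ²`, one has `Δ(hⱼ²) = 2 |∇hⱼ|² + 2 hⱼ Δhⱼ`, and the
second term vanishes because `hⱼ` is harmonic; hence the integrand is pointwise nonnegative.
-/

open RealInnerProductSpace MeasureTheory

noncomputable def lap {d : ℕ} (g : EuclideanSpace ℝ (Fin d) → ℝ)
    (x : EuclideanSpace ℝ (Fin d)) : ℝ :=
  ∑ i : Fin d,
    fderiv ℝ (fun y => fderiv ℝ g y (EuclideanSpace.single i 1)) x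
      (EuclideanSpace.single i 1)

section SecondDerivative

variable {E F : Type*} [NormedAddCommGroup E] [NormedSpace ℝ E] [NormedAddCommGroup F]
  [NormedSpace ℝ F] {x : E}

theorem ContDiffAt.differentiableAt_fderiv_apply {f : E → F} (hf : ContDiffAt ℝ 2 f x) (v : E) :
    DifferentiableAt ℝ (fun y => fderiv ℝ f y v) x :=
  ((hf.fderiv_right (m := 1) le_rfl).clm_apply contDiffAt_const).differentiableAt one_ne_zero

theorem ContDiffAt.eventually_differentiableAt {f : E → F} (hf : ContDiffAt ℝ 2 f x) :
    ∀ᶠ y in nhds x, DifferentiableAt ℝ f y :=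
  (hf.eventually (by simp)).mono fun _ hy => hy.differentiableAt two_ne_zero

theorem fderiv_fderiv_sum_apply {ι : Type*} (s : Finset ι) {f : ι → E → ℝ}
    (hf : ∀ j ∈ s, ContDiffAt ℝ 2 (f j) x) (v : E) :
    fderiv ℝ (fun y => fderiv ℝ (fun z => ∑ j ∈ s, f j z) y v) x v =
      ∑ j ∈ s, fderiv ℝ (fun y => fderiv ℝ (f j) y v) x v := by
  have hsum : (fun y => fderiv ℝ (fun z => ∑ j ∈ s, f j z) y v) =ᶠ[nhds x]
      fun y => ∑ j ∈ s, fderiv ℝ (f j) y v := by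
    filter_upwards [(Filter.eventually_all_finset s).2
      fun j hj => (hf j hj).eventually_differentiableAt] with y hy
    rw [fderiv_fun_sum hy, _root_.sum_apply]
  rw [hsum.fderiv_eq, fderiv_fun_sum fun j hj => (hf j hj).differentiableAt_fderiv_apply v,
    _root_.sum_apply]

theorem fderiv_fderiv_sq_apply {f : E → ℝ} (hf : ContDiffAt ℝ 2 f x) (v : E) :
    fderiv ℝ (fun y => fderiv ℝ (fun z => f z ^ 2) y v) x v =
      2 * fderiv ℝ f x v ^ 2 + 2 * f x * fderiv ℝ (fun y => fderiv ℝ f y v) x v := by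
  have hsq : (fun y => fderiv ℝ (fun z => f z ^ 2) y v) =ᶠ[nhds x]
      fun y => 2 * (f y * fderiv ℝ f y v) := by
    filter_upwards [hf.eventually_differentiableAt] with y hy
    rw [fderiv_fun_pow 2 hy]
    simp only [Nat.add_one_sub_one, pow_one, nsmul_eq_mul, Nat.cast_ofNat, smul_apply,
      smul_eq_mul]
    ring
  have hd : HasFDerivAt (fun y => 2 * (f y * fderiv ℝ f y v)) _ x :=
    ((hf.differentiableAt two_ne_zero).hasFDerivAt.mul
      (hf.differentiableAt_fderiv_apply v).hasFDerivAt).const_mul 2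
  rw [hsq.fderiv_eq, hd.fderiv]
  simp only [smul_add, add_apply, smul_apply, smul_eq_mul]
  ring

end SecondDerivative

section Laplacian

variable {d : ℕ} {x : EuclideanSpace ℝ (Fin d)}

theorem lap_sum {ι : Type*} (s : Finset ι) {f : ι → EuclideanSpace ℝ (Fin d) → ℝ}
    (hf : ∀ j ∈ s, ContDiffAt ℝ 2 (f j) x) :
    lap (fun y => ∑ j ∈ s, f j y) x = ∑ j ∈ s, lap (f j) x := by
  simp only [lap, fderiv_fderiv_sum_apply s hf]
  exact Finset.sum_comm

theorem lap_sq {f : EuclideanSpace ℝ (Fin d) → ℝ} (hf : ContDiffAt ℝ 2 f x) :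
    lap (fun y => f y ^ 2) x =
      2 * ∑ i, fderiv ℝ f x (EuclideanSpace.single i 1) ^ 2 + 2 * f x * lap f x := by
  simp only [lap, fderiv_fderiv_sq_apply hf, Finset.sum_add_distrib, Finset.mul_sum]

theorem lap_norm_sq_nonneg {m : ℕ} {h : EuclideanSpace ℝ (Fin d) → EuclideanSpace ℝ (Fin m)}
    (hh : ContDiffAt ℝ 2 h x) (hharm : ∀ j, lap (fun y => h y j) x = 0) :
    0 ≤ lap (fun y => ‖h y‖ ^ 2) x := by
  have hcomp : ∀ j, ContDiffAt ℝ 2 (fun y => h y j) x := fun j =>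
    hh.continuousLinearMap_comp (EuclideanSpace.proj (𝕜 := ℝ) j)
  have hsq : (fun y => ‖h y‖ ^ 2) = fun y => ∑ j, h y j ^ 2 := by
    funext y
    simp [EuclideanSpace.norm_sq_eq]
  rw [hsq, lap_sum _ fun j _ => (hcomp j).pow 2]
  refine Finset.sum_nonneg fun j _ => ?_
  rw [lap_sq (hcomp j), hharm j, mul_zero, add_zero]
  positivity

end Laplacian

theorem integral_box_sum_fderiv_eq_sum_face_integrals {n : ℕ}
    {F : Fin (n + 1) → EuclideanSpace ℝ (Fin (n + 1)) → ℝ} {a b : Fin (n + 1) → ℝ} (hle : a ≤ b)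
    (hF : ∀ i, ∀ y ∈ Set.Icc a b, ContDiffAt ℝ 1 (F i) (WithLp.toLp 2 y)) :
    ∫ x in Set.Icc a b, ∑ i, fderiv ℝ (F i) (WithLp.toLp 2 x) (EuclideanSpace.single i 1) =
      ∑ i, ((∫ x in Set.Icc (a ∘ i.succAbove) (b ∘ i.succAbove),
          F i (WithLp.toLp 2 (i.insertNth (b i) x : Fin (n + 1) → ℝ))) -
        ∫ x in Set.Icc (a ∘ i.succAbove) (b ∘ i.succAbove),
          F i (WithLp.toLp 2 (i.insertNth (a i) x : Fin (n + 1) → ℝ))) := by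
  let toLp : (Fin (n + 1) → ℝ) →L[ℝ] EuclideanSpace ℝ (Fin (n + 1)) :=
    (EuclideanSpace.equiv (Fin (n + 1)) ℝ).symm
  have hc : ∀ i, ContinuousOn (fun y => F i (toLp y)) (Set.Icc a b) := fun i y hy =>
    ((hF i y hy).continuousAt.comp toLp.continuous.continuousAt).continuousWithinAt
  have hd : ∀ x ∈ (Set.univ.pi fun i => Set.Ioo (a i) (b i)) \ ∅, ∀ i,
      HasFDerivAt (fun y => F i (toLp y)) ((fderiv ℝ (F i) (toLp x)).comp toLp) x := by
    intro x hx i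
    have hx' : x ∈ Set.Icc a b :=
      ⟨fun j => (hx.1 j trivial).1.le, fun j => (hx.1 j trivial).2.le⟩
    exact ((hF i x hx').differentiableAt one_ne_zero).hasFDerivAt.comp x toLp.hasFDerivAt
  have hi : IntegrableOn
      (fun x => ∑ i, fderiv ℝ (F i) (toLp x) (EuclideanSpace.single i 1)) (Set.Icc a b) := by
    refine (continuousOn_finsetSum _ fun i _ y hy => ?_).integrableOn_compact isCompact_Icc
    exact ((((hF i y hy).fderiv_right (m := 0) le_rfl).continuousAt.clm_apply
      continuousAt_const).comp toLp.continuous.continuousAt).continuousWithinAt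
  exact integral_divergence_of_hasFDerivAt_off_countable' a b hle _ _ ∅ Set.countable_empty hc hd hi

/-- Earnshaw-type inequality: if `h` is a `C²` vector field with harmonic
components on an open set `U ⊆ ℝ^d` (`d = n+1 ≥ 1`) and `[a,b] ⊆ U` is a
closed box with nonempty interior, then the total outward flux of the Kelvin
force `f(h) = ∇(‖h‖²)` through the boundary of the box, i.e. the sum over `i`
of the integrals of `∂(‖h‖²)/∂xᵢ` over the face `xᵢ = bᵢ` minus the integrals
over the face `xᵢ = aᵢ`, is nonnegative. -/
theorem kelvin_force_box_flux_nonneg (n : ℕ)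
    (U : Set (EuclideanSpace ℝ (Fin (n + 1)))) (hU : IsOpen U)
    (h : EuclideanSpace ℝ (Fin (n + 1)) → EuclideanSpace ℝ (Fin (n + 1)))
    (hh : ContDiffOn ℝ 2 h U)
    (hharm : ∀ x ∈ U, ∀ i : Fin (n + 1), lap (fun y => h y i) x = 0)
    (a b : EuclideanSpace ℝ (Fin (n + 1))) (hab : ∀ i, a i < b i)
    (hbox : {y : EuclideanSpace ℝ (Fin (n + 1)) |
        ∀ i, a i ≤ y i ∧ y i ≤ b i} ⊆ U) :
    0 ≤ ∑ i : Fin (n + 1),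
        ((∫ x in Set.Icc (fun j => a (i.succAbove j)) (fun j => b (i.succAbove j)),
            fderiv ℝ (fun y => ‖h y‖ ^ 2) (WithLp.toLp 2 (i.insertNth (b i) x : Fin (n + 1) → ℝ))
              (EuclideanSpace.single i 1))
          - ∫ x in Set.Icc (fun j => a (i.succAbove j)) (fun j => b (i.succAbove j)),
              fderiv ℝ (fun y => ‖h y‖ ^ 2) (WithLp.toLp 2 (i.insertNth (a i) x : Fin (n + 1) → ℝ))
                (EuclideanSpace.single i 1)) := by
  have hmem : ∀ y ∈ Set.Icc a.ofLp b.ofLp, WithLp.toLp 2 y ∈ U := fun y hy =>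
    hbox fun i => ⟨hy.1 i, hy.2 i⟩
  have hh_at : ∀ y ∈ Set.Icc a.ofLp b.ofLp, ContDiffAt ℝ 2 h (WithLp.toLp 2 y) := fun y hy =>
    hh.contDiffAt (hU.mem_nhds (hmem y hy))
  calc 0 ≤ ∫ y in Set.Icc a.ofLp b.ofLp, lap (fun z => ‖h z‖ ^ 2) (WithLp.toLp 2 y) :=
        setIntegral_nonneg measurableSet_Icc fun y hy =>
          lap_norm_sq_nonneg (hh_at y hy) (hharm _ (hmem y hy))
    _ = _ := integral_box_sum_fderiv_eq_sum_face_integrals (fun i => (hab i).le)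
        fun i y hy => ((hh_at y hy).norm_sq ℝ |>.fderiv_right (m := 1) le_rfl).clm_apply
          contDiffAt_const
end
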